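/- For every integer g ≥ 2 and real ε > 0, there exists c > 0 such that the following holds for every sufficiently large integer n: for every graph G on the vertex set of K_n with minimum degree at least (3/4 + ε)·n and for every triangle R on three vertices of K_n, there are at least c·n^{2g−1} distinct g-spheres rooted at R all of whose non-root edges lie in G. -/

import Mathlib

open Finset
open scoped Classical

noncomputable section

/-- The degree of `v` in `G` (number of neighbours). -/
def degOf {n : ℕ} (G : SimpleGraph (Fin n)) (v : Fin n) : ℕ :=
  (G.neighborSet v).ncard

end

/-!
Choose the apex `u` and then the interior rim vertices `b₂, …, b_{2g−1}` one at a time. Each new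
vertex must be a common neighbour of at most four vertices chosen before it (`x, y` for `u`;
`v`, `u`, the previous rim vertex and `y` for a rim vertex) and must avoid at most `2g + 1` used
vertices. With minimum degree `(3/4 + ε)n` any four vertices have at least `4εn` common
neighbours, so every step has at least `εn` choices once `n ≫ g/ε`, and the greedy choices give
at least `(εn)^{2g−1}` distinct spheres.
-/

theorem pow_le_card_filter_forall_mem {α : Type*} [Fintype α] [Nonempty α] {t : ℕ} :
    ∀ {m : ℕ} (A : Fin m → (Fin m → α) → Finset α),
      (∀ i w w', (∀ j < i, w j = w' j) → A i w = A i w') → (∀ i w, t ≤ #(A i w)) →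
      t ^ m ≤ #{w : Fin m → α | ∀ i, w i ∈ A i w}
  | 0, _, _, _ => by simp
  | m + 1, A, hA, ht => by
    let T : α → Finset (Fin m → α) := fun a => {w | ∀ i, w i ∈ A i.succ (Fin.cons a w)}
    have hT (a : α) : t ^ m ≤ #(T a) :=
      pow_le_card_filter_forall_mem (fun i w => A i.succ (Fin.cons a w))
        (fun i w w' h => hA _ _ _ fun j hj => by
          cases j using Fin.cases with
          | zero => rfl
          | succ j => simpa using h j (Fin.succ_lt_succ_iff.mp hj))
        (fun _ _ => ht _ _)
    let S := A 0 fun _ => Classical.arbitrary α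
    have hS (w : Fin (m + 1) → α) : A 0 w = S := hA _ _ _ fun j hj => absurd hj j.not_lt_zero
    have hmaps : ∀ q ∈ S.sigma T, Fin.cons q.1 q.2 ∈ ({w | ∀ i, w i ∈ A i w} : Finset _) := by
      rintro ⟨a, w⟩ hq
      simp only [mem_sigma, mem_filter, mem_univ, true_and, T] at hq ⊢
      intro i
      cases i using Fin.cases with
      | zero => simpa [hS] using hq.1
      | succ i => simpa using hq.2 i
    have hinj : Set.InjOn (fun q : Σ _ : α, Fin m → α => (Fin.cons q.1 q.2 : Fin (m + 1) → α))
        (S.sigma T) := by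
      rintro ⟨a, w⟩ - ⟨a', w'⟩ - h
      obtain ⟨rfl, rfl⟩ := Fin.cons_inj.mp h
      rfl
    calc t ^ (m + 1) ≤ #S • t ^ m := by
          rw [pow_succ', smul_eq_mul]
          exact Nat.mul_le_mul_right _ (ht 0 _)
      _ ≤ ∑ a ∈ S, #(T a) := card_nsmul_le_sum _ _ _ fun a _ => hT a
      _ = #(S.sigma T) := (card_sigma _ _).symm
      _ ≤ _ := card_le_card_of_injOn _ hmaps hinj

namespace SimpleGraph

variable {V : Type*} [Fintype V] (G : SimpleGraph V)

noncomputable def commonNbhd (S : Finset V) : Finset V := {z | ∀ a ∈ S, G.Adj a z}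

@[simp]
theorem mem_commonNbhd {S : Finset V} {z : V} : z ∈ G.commonNbhd S ↔ ∀ a ∈ S, G.Adj a z := by
  simp [commonNbhd]

theorem card_le_card_commonNbhd_sdiff_add {k : ℕ} (S F : Finset V)
    (hk : ∀ a ∈ S, Fintype.card V ≤ G.degree a + k) :
    Fintype.card V ≤ #(G.commonNbhd S \ F) + #F + #S * k := by
  have hcover : univ ⊆ G.commonNbhd S \ F ∪ F ∪ S.biUnion fun a => (G.neighborFinset a)ᶜ := by
    intro z _
    by_cases hz : z ∈ F
    · simp [hz]
    · simpa [hz] using em (∀ a ∈ S, G.Adj a z)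
  have hmissing : ∀ a ∈ S, #(G.neighborFinset a)ᶜ ≤ k := fun a ha => by
    rw [card_compl, card_neighborFinset_eq_degree]
    have := hk a ha
    omega
  calc Fintype.card V ≤ #(G.commonNbhd S \ F ∪ F) + #(S.biUnion fun a => (G.neighborFinset a)ᶜ) :=
        (card_le_card hcover).trans (card_union_le _ _)
    _ ≤ #(G.commonNbhd S \ F) + #F + ∑ a ∈ S, #(G.neighborFinset a)ᶜ :=
        add_le_add (card_union_le _ _) card_biUnion_le
    _ ≤ #(G.commonNbhd S \ F) + #F + #S * k := by
        gcongr
        simpa using sum_le_card_nsmul _ _ _ hmissing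

end SimpleGraph

noncomputable section RootedSphere

variable {V : Type*} {L : ℕ}

def IsRootedSphere [NeZero L] (G : SimpleGraph V) (v x y u : V) (b : Fin L → V) : Prop :=
  Function.Injective b ∧ (∀ j, b j ≠ v) ∧ (∀ j, b j ≠ u) ∧ u ≠ v ∧
    b ⟨0, Nat.pos_of_neZero L⟩ = x ∧ b ⟨L - 1, Nat.sub_one_lt (NeZero.ne L)⟩ = y ∧
    (∀ j : Fin L, 1 ≤ (j : ℕ) → (j : ℕ) ≤ L - 2 → G.Adj v (b j)) ∧
    (∀ j, G.Adj u (b j)) ∧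
    (∀ (j : ℕ) (hj : j + 1 < L), G.Adj (b ⟨j, by omega⟩) (b ⟨j + 1, hj⟩))

/-- Slot `0` of `w` holds the apex `u`; since `b 0 = x` is fixed, the slots `1, …, L - 2` of `w`
are free to hold the interior rim vertices `b 1, …, b (L - 2)`. -/
def sphereRim (x y : V) (w : Fin (L - 1) → V) (j : Fin L) : V :=
  if h : (j : ℕ) < L - 1 then if (j : ℕ) = 0 then x else w ⟨j, h⟩ else y

section sphereRim

variable {x y : V} {w : Fin (L - 1) → V} {j : Fin L}

theorem sphereRim_of_eq_zero (hL : 1 < L) (hj : (j : ℕ) = 0) : sphereRim x y w j = x := by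
  simp [sphereRim, hj, hL]

theorem sphereRim_of_eq_sub_one (hj : (j : ℕ) = L - 1) : sphereRim x y w j = y := by
  simp [sphereRim, hj]

theorem sphereRim_of_ne_zero (hj : (j : ℕ) < L - 1) (hj0 : (j : ℕ) ≠ 0) :
    sphereRim x y w j = w ⟨j, hj⟩ := by
  simp [sphereRim, hj, hj0]

theorem sphereRim_cases (hL : 1 < L) (j : Fin L) :
    ((j : ℕ) = 0 ∧ sphereRim x y w j = x) ∨ ((j : ℕ) = L - 1 ∧ sphereRim x y w j = y) ∨
      ∃ i : Fin (L - 1), (i : ℕ) ≠ 0 ∧ (i : ℕ) = j ∧ sphereRim x y w j = w i := by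
  by_cases hj0 : (j : ℕ) = 0
  · exact .inl ⟨hj0, sphereRim_of_eq_zero hL hj0⟩
  by_cases hjl : (j : ℕ) = L - 1
  · exact .inr (.inl ⟨hjl, sphereRim_of_eq_sub_one hjl⟩)
  have hj : (j : ℕ) < L - 1 := by omega
  exact .inr (.inr ⟨⟨j, hj⟩, hj0, rfl, sphereRim_of_ne_zero hj hj0⟩)

theorem sphereRim_injective (hL : 1 < L) (hxy : x ≠ y) (hx : ∀ i, w i ≠ x) (hy : ∀ i, w i ≠ y)
    (hw : Function.Injective w) : Function.Injective (sphereRim x y w) := by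
  intro j j' h
  rcases sphereRim_cases (w := w) hL j with ⟨hj, hv⟩ | ⟨hj, hv⟩ | ⟨i, -, hj, hv⟩ <;>
  rcases sphereRim_cases (w := w) hL j' with ⟨hj', hv'⟩ | ⟨hj', hv'⟩ | ⟨i', -, hj', hv'⟩ <;>
  rw [hv, hv'] at h
  all_goals first
    | exact Fin.ext (by omega)
    | exact absurd h hxy
    | exact absurd h.symm hxy
    | exact absurd h (hx _)
    | exact absurd h.symm (hx _)
    | exact absurd h (hy _)
    | exact absurd h.symm (hy _)
    | exact Fin.ext (by have := congrArg Fin.val (hw h); omega)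

end sphereRim

/-- The vertices that the vertex chosen in slot `i` must be adjacent to. Every interior rim vertex
is asked to see `y`, not only `b (L - 2)`: this keeps the rule uniform and still asks for at most
four common neighbours, which minimum degree above `3n/4` provides. -/
def sphereAnchors (v x y : V) (w : Fin (L - 1) → V) (i : Fin (L - 1)) : Finset V :=
  if (i : ℕ) = 0 then {x, y} else {v, y, w ⟨0, i.pos⟩, sphereRim x y w ⟨i - 1, by omega⟩}

variable [Fintype V]

def sphereStep (G : SimpleGraph V) (v x y : V) (i : Fin (L - 1))
    (w : Fin (L - 1) → V) : Finset V :=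
  G.commonNbhd (sphereAnchors v x y w i) \ ({v, x, y} ∪ (Iio i).image w)

variable {x y v : V} {w w' : Fin (L - 1) → V} {i : Fin (L - 1)}

theorem sphereStep_congr (G : SimpleGraph V) (h : ∀ j < i, w j = w' j) :
    sphereStep G v x y i w = sphereStep G v x y i w' := by
  have hanchors : sphereAnchors v x y w i = sphereAnchors v x y w' i := by
    unfold sphereAnchors
    split_ifs with hi
    · rfl
    have hprev : sphereRim x y w ⟨i - 1, by omega⟩ = sphereRim x y w' ⟨i - 1, by omega⟩ := by
      unfold sphereRim
      split_ifs
      · rfl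
      · exact h _ (Fin.lt_def.mpr (by simp; omega))
      · rfl
    rw [h _ (Fin.lt_def.mpr (by simp; omega)), hprev]
  have hearlier : (Iio i).image w = (Iio i).image w' :=
    image_congr fun j hj => h j (mem_Iio.mp hj)
  rw [sphereStep, sphereStep, hanchors, hearlier]

theorem card_le_card_sphereStep (G : SimpleGraph V) {k t : ℕ}
    (hk : ∀ a, Fintype.card V ≤ G.degree a + k) (ht : t + (L + 1) + 4 * k ≤ Fintype.card V) :
    t ≤ #(sphereStep G v x y i w) := by
  have hanchors : #(sphereAnchors v x y w i) ≤ 4 := by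
    unfold sphereAnchors
    split_ifs
    · exact card_le_two.trans (by norm_num)
    · exact card_le_four
  have hforbidden : #({v, x, y} ∪ (Iio i).image w) ≤ L + 1 := by
    have h3 : #({v, x, y} : Finset V) ≤ 3 := card_le_three
    have hi : #((Iio i).image w) ≤ i := card_image_le.trans (Fin.card_Iio i).le
    have := card_union_le ({v, x, y} : Finset V) ((Iio i).image w)
    omega
  have := G.card_le_card_commonNbhd_sdiff_add (sphereAnchors v x y w i)
    ({v, x, y} ∪ (Iio i).image w) (k := k) fun a _ => hk a
  have := Nat.mul_le_mul_right k hanchors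
  rw [sphereStep]
  omega

theorem mem_sphereStep {G : SimpleGraph V} {z : V} :
    z ∈ sphereStep G v x y i w ↔ (∀ a ∈ sphereAnchors v x y w i, G.Adj a z) ∧
      (z ≠ v ∧ z ≠ x ∧ z ≠ y) ∧ ∀ j < i, w j ≠ z := by
  simp [sphereStep, and_assoc]

theorem injective_of_forall_mem_sphereStep {G : SimpleGraph V}
    (hw : ∀ i, w i ∈ sphereStep G v x y i w) : Function.Injective w := by
  intro i j h
  by_contra hne
  rcases lt_or_gt_of_ne hne with hij | hji
  · exact (mem_sphereStep.mp (hw j)).2.2 i hij h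
  · exact (mem_sphereStep.mp (hw i)).2.2 j hji h.symm

theorem isRootedSphere_sphereRim [NeZero L] (G : SimpleGraph V) (hL : 3 ≤ L)
    (hvx : v ≠ x) (hvy : v ≠ y) (hxy : x ≠ y) (hw : ∀ i, w i ∈ sphereStep G v x y i w) :
    IsRootedSphere G v x y (w ⟨0, by omega⟩) (sphereRim x y w) := by
  have hmem i := mem_sphereStep.mp (hw i)
  have hfresh i : w i ≠ v ∧ w i ≠ x ∧ w i ≠ y := (hmem i).2.1
  have hinj := injective_of_forall_mem_sphereStep hw
  set u := w ⟨0, by omega⟩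
  have hu : G.Adj x u ∧ G.Adj y u := by
    have := (hmem ⟨0, by omega⟩).1
    simpa [sphereAnchors] using this
  have hrim (i : Fin (L - 1)) (hi : (i : ℕ) ≠ 0) : G.Adj v (w i) ∧ G.Adj y (w i) ∧
      G.Adj u (w i) ∧ G.Adj (sphereRim x y w ⟨i - 1, by omega⟩) (w i) := by
    have := (hmem i).1
    simpa [sphereAnchors, hi] using this
  have hne_u (i : Fin (L - 1)) (hi : (i : ℕ) ≠ 0) : w i ≠ u :=
    fun h => hi (congrArg Fin.val (hinj h))
  refine ⟨?_, ?_, ?_, (hfresh _).1, sphereRim_of_eq_zero (by omega) rfl,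
    sphereRim_of_eq_sub_one rfl, ?_, ?_, ?_⟩
  · exact sphereRim_injective (by omega) hxy (fun i => (hfresh i).2.1) (fun i => (hfresh i).2.2)
      hinj
  · intro j
    rcases sphereRim_cases (w := w) (x := x) (y := y) (by omega) j with
      ⟨-, hv⟩ | ⟨-, hv⟩ | ⟨i, -, -, hv⟩ <;> rw [hv]
    exacts [hvx.symm, hvy.symm, (hfresh i).1]
  · intro j
    rcases sphereRim_cases (w := w) (x := x) (y := y) (by omega) j with
      ⟨-, hv⟩ | ⟨-, hv⟩ | ⟨i, hi, -, hv⟩ <;> rw [hv]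
    exacts [hu.1.ne, hu.2.ne, hne_u i hi]
  · intro j hj1 hj2
    rw [sphereRim_of_ne_zero (j := j) (by omega) (by omega)]
    exact (hrim ⟨j, by omega⟩ (Nat.one_le_iff_ne_zero.mp hj1)).1
  · intro j
    rcases sphereRim_cases (w := w) (x := x) (y := y) (by omega) j with
      ⟨-, hv⟩ | ⟨-, hv⟩ | ⟨i, hi, -, hv⟩ <;> rw [hv]
    exacts [hu.1.symm, hu.2.symm, (hrim i hi).2.2.1]
  · intro j hj
    by_cases hlast : j + 1 = L - 1
    · rw [sphereRim_of_eq_sub_one (j := ⟨j + 1, hj⟩) hlast,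
        sphereRim_of_ne_zero (j := ⟨j, by omega⟩) (by simp; omega) (by simp; omega)]
      exact (hrim ⟨j, by omega⟩ (show j ≠ 0 by omega)).2.1.symm
    · rw [sphereRim_of_ne_zero (j := ⟨j + 1, hj⟩) (by simp; omega) (by simp)]
      simpa using (hrim ⟨j + 1, by omega⟩ (by simp)).2.2.2

theorem pow_le_ncard_isRootedSphere [NeZero L] (G : SimpleGraph V) (hL : 3 ≤ L) {k t : ℕ}
    (hk : ∀ a, Fintype.card V ≤ G.degree a + k) (ht : t + (L + 1) + 4 * k ≤ Fintype.card V)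
    (hvx : v ≠ x) (hvy : v ≠ y) (hxy : x ≠ y) :
    t ^ (L - 1) ≤ {p : V × (Fin L → V) | IsRootedSphere G v x y p.1 p.2}.ncard := by
  have : Nonempty V := ⟨v⟩
  let φ (w : Fin (L - 1) → V) : V × (Fin L → V) := (w ⟨0, by omega⟩, sphereRim x y w)
  have hφ : Function.Injective φ := by
    intro w w' h
    obtain ⟨hapex, hrim⟩ := Prod.mk.inj h
    funext i
    by_cases hi : (i : ℕ) = 0
    · rwa [show i = ⟨0, by omega⟩ from Fin.ext hi]
    · have := congrFun hrim ⟨i, by omega⟩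
      rwa [sphereRim_of_ne_zero (L := L) i.isLt hi, sphereRim_of_ne_zero (L := L) i.isLt hi]
        at this
  let S : Finset (Fin (L - 1) → V) := {w | ∀ i, w i ∈ sphereStep G v x y i w}
  calc t ^ (L - 1) ≤ #S :=
        pow_le_card_filter_forall_mem _ (fun _ _ _ h => sphereStep_congr G h)
          fun _ _ => card_le_card_sphereStep G hk ht
    _ = (S.image φ : Set (V × (Fin L → V))).ncard := by
        rw [Set.ncard_coe_finset, card_image_of_injective _ hφ]
    _ ≤ _ := by
        refine Set.ncard_le_ncard ?_ (Set.toFinite _)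
        intro p hp
        obtain ⟨w, hw, rfl⟩ := by simpa using hp
        exact isRootedSphere_sphereRim G hL hvx hvy hxy (by simpa [S] using hw)

end RootedSphere

theorem degOf_eq_degree {n : ℕ} (G : SimpleGraph (Fin n)) (a : Fin n) :
    degOf G a = G.degree a := by
  rw [degOf, Set.ncard_eq_toFinset_card', ← SimpleGraph.card_neighborFinset_eq_degree]
  congr 1

/-- **Counting `g`-spheres.** For every integer `g ≥ 2` and real `ε > 0` there is `c > 0`
such that for all large `n`: for every graph `G` on the vertices of `K_n` with minimum
degree at least `(3/4 + ε)·n` and every triangle `R = {v, x, y}` on three distinct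
vertices of `K_n`, there are at least `c·n^{2g−1}` distinct `g`-spheres rooted at `R` all
of whose non-root edges lie in `G`.  A `g`-sphere rooted at `R` is given by the choice of
the `2g−1` new vertices `u, b₂, …, b_{2g−1}`; here `p.1 = u` and `p.2 j = b_{j+1}` (so
`p.2 0 = b₁ = x` and `p.2 (2g−1) = b_{2g} = y` are the non-apex root vertices), and the
required non-root edges are `v bⱼ` for `2 ≤ j ≤ 2g−1`, `u bⱼ` for `1 ≤ j ≤ 2g`, and
`bⱼ b_{j+1}` for `1 ≤ j ≤ 2g−1` (in the paper's 1-based indexing). -/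
theorem gSphere_count (g : ℕ) (hg : 2 ≤ g) (ε : ℝ) (hε : 0 < ε) :
    ∃ c : ℝ, 0 < c ∧ ∃ n₀ : ℕ, ∀ n : ℕ, n₀ ≤ n →
      ∀ G : SimpleGraph (Fin n),
        (∀ w, (3 / 4 + ε) * n ≤ (degOf G w : ℝ)) →
        ∀ v x y : Fin n, v ≠ x → v ≠ y → x ≠ y →
          c * (n:ℝ) ^ (2 * g - 1) ≤
            (({p : Fin n × (Fin (2 * g) → Fin n) |
                Function.Injective p.2 ∧ (∀ j, p.2 j ≠ v) ∧ (∀ j, p.2 j ≠ p.1) ∧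
                p.1 ≠ v ∧
                p.2 ⟨0, by omega⟩ = x ∧ p.2 ⟨2 * g - 1, by omega⟩ = y ∧
                (∀ j : Fin (2 * g), 1 ≤ (j : ℕ) → (j : ℕ) ≤ 2 * g - 2 → G.Adj v (p.2 j)) ∧
                (∀ j : Fin (2 * g), G.Adj p.1 (p.2 j)) ∧
                (∀ (j : ℕ) (hj : j + 1 < 2 * g),
                  G.Adj (p.2 ⟨j, by omega⟩) (p.2 ⟨j + 1, hj⟩))}).ncard : ℝ) := by
  set ε' := min ε (1 / 4)
  have hε' : 0 < ε' := lt_min hε (by norm_num)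
  refine ⟨ε' ^ (2 * g - 1), by positivity, ⌈(2 * g + 2) / (3 * ε')⌉₊,
    fun n hn G hG v x y hvx hvy hxy => ?_⟩
  have : NeZero (2 * g) := ⟨by omega⟩
  set t := ⌈ε' * n⌉₊
  -- `k` bounds the number of non-neighbours of a vertex; capping `ε` at `1/4` keeps it meaningful.
  set k := ⌊(1 / 4 - ε') * n⌋₊
  have hk (a : Fin n) : Fintype.card (Fin n) ≤ G.degree a + k := by
    have hdeg := hG a
    have hfloor := Nat.lt_floor_add_one ((1 / 4 - ε') * n)
    rw [degOf_eq_degree] at hdeg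
    rw [Fintype.card_fin]
    have : (n : ℝ) < G.degree a + k + 1 := by nlinarith [min_le_left ε (1 / 4)]
    have : n < G.degree a + k + 1 := by exact_mod_cast this
    omega
  have ht : t + (2 * g + 1) + 4 * k ≤ Fintype.card (Fin n) := by
    have htn := Nat.ceil_lt_add_one (by positivity : 0 ≤ ε' * n)
    have hkn := Nat.floor_le (by nlinarith [min_le_right ε (1 / 4)] : 0 ≤ (1 / 4 - ε') * n)
    have hn' := (div_le_iff₀ (by positivity)).mp ((Nat.le_ceil _).trans (Nat.cast_le.mpr hn))
    rw [Fintype.card_fin]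
    exact_mod_cast (by push_cast; linarith : ((t + (2 * g + 1) + 4 * k : ℕ) : ℝ) ≤ n)
  calc ε' ^ (2 * g - 1) * (n : ℝ) ^ (2 * g - 1) = (ε' * n) ^ (2 * g - 1) := (mul_pow ..).symm
    _ ≤ (t : ℝ) ^ (2 * g - 1) := pow_le_pow_left₀ (by positivity) (Nat.le_ceil _) _
    _ ≤ _ := by exact_mod_cast pow_le_ncard_isRootedSphere G (by omega) hk ht hvx hvy hxy
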